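/- arXiv:1712.04705 — 3 statements merged into one kernel-verified Lean document; each statement's English description precedes it below -/
import Mathlib

section
/- Let g : V → W be γ-Hölder continuous with γ ∈ (0,1] between normed spaces, with Hölder seminorm ‖g‖_γ. Then for every κ ∈ [0,1] and all y, z, y', z' ∈ V, |g(z) - g(y) - g(z') + g(y')| ≤ ‖g‖_γ · (|y'-y|^{κγ} + |z'-z|^{κγ}) · (|z'-y'|^{γ(1-κ)} + |z-y|^{γ(1-κ)}). -/
lemma real_rpow_add_le_add_rpow {s t p : ℝ} (hs : 0 ≤ s) (ht : 0 ≤ t)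
    (hp : 0 ≤ p) (hp1 : p ≤ 1) : (s + t) ^ p ≤ s ^ p + t ^ p := by
  lift s to NNReal using hs
  lift t to NNReal using ht
  have := NNReal.rpow_add_le_add_rpow s t hp hp1
  exact_mod_cast this

/-- Four-point interpolated Hölder estimate (Lemma 1 of the paper). -/
theorem four_point_holder_interpolation
    {V W : Type*} [NormedAddCommGroup V] [NormedAddCommGroup W]
    (g : V → W) (γ Hg κ : ℝ)
    (hγ : 0 < γ) (hγ1 : γ ≤ 1) (hκ0 : 0 ≤ κ) (hκ1 : κ ≤ 1)
    (hHg : 0 ≤ Hg)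
    (hg : ∀ a b : V, ‖g a - g b‖ ≤ Hg * ‖a - b‖ ^ γ)
    (y z y' z' : V) :
    ‖g z - g y - g z' + g y'‖ ≤
      Hg * ((‖y' - y‖ ^ (κ * γ) + ‖z' - z‖ ^ (κ * γ)) *
        (‖z' - y'‖ ^ (γ * (1 - κ)) + ‖z - y‖ ^ (γ * (1 - κ)))) := by
  set X := ‖g z - g y - g z' + g y'‖ with hX
  have hX0 : 0 ≤ X := norm_nonneg _
  set a := ‖y' - y‖ with ha
  set b := ‖z' - z‖ with hb
  set c := ‖z' - y'‖ with hc
  set d := ‖z - y‖ with hd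
  have ha0 : (0:ℝ) ≤ a := norm_nonneg _
  have hb0 : (0:ℝ) ≤ b := norm_nonneg _
  have hc0 : (0:ℝ) ≤ c := norm_nonneg _
  have hd0 : (0:ℝ) ≤ d := norm_nonneg _
  -- bound 1: X ≤ Hg * (a^γ + b^γ)
  have h1 : X ≤ Hg * (a ^ γ + b ^ γ) := by
    have e : g z - g y - g z' + g y' = (g y' - g y) - (g z' - g z) := by abel
    calc X = ‖(g y' - g y) - (g z' - g z)‖ := by rw [hX, e]
      _ ≤ ‖g y' - g y‖ + ‖g z' - g z‖ := norm_sub_le _ _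
      _ ≤ Hg * a ^ γ + Hg * b ^ γ := add_le_add (hg y' y) (hg z' z)
      _ = Hg * (a ^ γ + b ^ γ) := by ring
  -- bound 2: X ≤ Hg * (c^γ + d^γ)
  have h2 : X ≤ Hg * (c ^ γ + d ^ γ) := by
    have e : g z - g y - g z' + g y' = (g z - g y) - (g z' - g y') := by abel
    calc X = ‖(g z - g y) - (g z' - g y')‖ := by rw [hX, e]
      _ ≤ ‖g z - g y‖ + ‖g z' - g y'‖ := norm_sub_le _ _
      _ ≤ Hg * d ^ γ + Hg * c ^ γ := add_le_add (hg z y) (hg z' y')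
      _ = Hg * (c ^ γ + d ^ γ) := by ring
  rcases eq_or_lt_of_le hX0 with hX0' | hXpos
  · rw [← hX0']
    positivity
  -- interpolation
  have hA0 : (0:ℝ) ≤ Hg * (a ^ γ + b ^ γ) := le_trans hX0 h1
  have hB0 : (0:ℝ) ≤ Hg * (c ^ γ + d ^ γ) := le_trans hX0 h2
  have key : X ≤ (Hg * (a ^ γ + b ^ γ)) ^ κ * (Hg * (c ^ γ + d ^ γ)) ^ (1 - κ) := by
    have : X = X ^ κ * X ^ (1 - κ) := by
      rw [← Real.rpow_add hXpos]; simp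
    rw [this]
    exact mul_le_mul (Real.rpow_le_rpow hX0 h1 hκ0)
      (Real.rpow_le_rpow hX0 h2 (by linarith))
      (Real.rpow_nonneg hX0 _) (Real.rpow_nonneg hA0 _)
  refine key.trans ?_
  have hHgsplit : (Hg : ℝ) ^ κ * Hg ^ (1 - κ) = Hg := by
    rcases eq_or_lt_of_le hHg with h | h
    · rcases eq_or_ne κ 0 with hk | hk
      · simp [← h, hk, Real.zero_rpow (by norm_num : (1:ℝ) - 0 ≠ 0)]
      · simp [← h, Real.zero_rpow hk]
    · rw [← Real.rpow_add h]; simp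
  have hsum1 : (a ^ γ + b ^ γ) ^ κ ≤ a ^ (κ * γ) + b ^ (κ * γ) := by
    have := real_rpow_add_le_add_rpow (s := a ^ γ) (t := b ^ γ)
      (Real.rpow_nonneg ha0 _) (Real.rpow_nonneg hb0 _) hκ0 hκ1
    rwa [← Real.rpow_mul ha0, ← Real.rpow_mul hb0, mul_comm γ κ] at this
  have hsum2 : (c ^ γ + d ^ γ) ^ (1 - κ) ≤ c ^ (γ * (1 - κ)) + d ^ (γ * (1 - κ)) := by
    have := real_rpow_add_le_add_rpow (s := c ^ γ) (t := d ^ γ) (p := 1 - κ)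
      (Real.rpow_nonneg hc0 _) (Real.rpow_nonneg hd0 _) (by linarith) (by linarith)
    rwa [← Real.rpow_mul hc0, ← Real.rpow_mul hd0] at this
  calc (Hg * (a ^ γ + b ^ γ)) ^ κ * (Hg * (c ^ γ + d ^ γ)) ^ (1 - κ)
      = (Hg ^ κ * Hg ^ (1 - κ)) *
        ((a ^ γ + b ^ γ) ^ κ * (c ^ γ + d ^ γ) ^ (1 - κ)) := by
        rw [Real.mul_rpow hHg (by positivity), Real.mul_rpow hHg (by positivity)]; ring
    _ ≤ Hg * ((a ^ (κ * γ) + b ^ (κ * γ)) * (c ^ (γ * (1 - κ)) + d ^ (γ * (1 - κ)))) := by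
        rw [hHgsplit]
        refine mul_le_mul_of_nonneg_left ?_ hHg
        exact mul_le_mul hsum1 hsum2 (Real.rpow_nonneg (by positivity) _) (by positivity)
end

section
/- (Additive sewing lemma) Let ω be a control on [0,T] and θ > 1. Let Ξ : {(s,t) : 0 ≤ s ≤ t ≤ T} → V satisfy |Ξ(r,t) − Ξ(r,s) − Ξ(s,t)| ≤ C·ω(r,t)^θ for all r ≤ s ≤ t. Then there exists a path I : [0,T] → V with I_0 = 0 such that |I_t − I_s − Ξ(s,t)| ≤ K·C·ω(s,t)^θ for all s ≤ t, where K is a constant depending only on θ (e.g. K = 2^θ/(2^{θ-1}−1)). Moreover I is unique among paths with this property vanishing at 0. -/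
/-!
Cut a partition of `[s, t]` at its last point `u` with `ω(s, u) ≤ ω(s, t) / 2`: the two
remaining sub-partitions carry at most half of the control each, and gluing them back costs two
defects, at most `2 C ω(s, t)^θ`. By induction on the number of intervals, every Riemann sum of
`Ξ` over a partition of `[s, t]` is then within `K C ω(s, t)^θ` of `Ξ(s, t)`, where
`K = 2^θ / (2^(θ-1) - 1)` is the fixed point of `K = 2 K 2^(-θ) + 2`.

Applied interval by interval, the same bound compares Riemann sums over a uniform grid and over
a refinement of it, up to `K C ∑ ω^θ ≤ K C (max ω)^(θ-1) ω(0, T)`. Since `ω` is uniformly small on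
short intervals, the sums over the grids of mesh `T / N` on `[0, t]` form a Cauchy sequence; its
limit `I_t` inherits the bound. Two such paths differ by increments bounded by `2 K C ω^θ`, whose
sums over fine grids vanish.
-/

open Finset Filter Topology

namespace Sewing

section RiemannSum

variable {W : Type*} [AddCommMonoid W]

def riemannSum (Ξ : ℝ → ℝ → W) (p : ℕ → ℝ) (n : ℕ) : W :=
  ∑ k ∈ range n, Ξ (p k) (p (k + 1))

theorem riemannSum_succ (Ξ : ℝ → ℝ → W) (p : ℕ → ℝ) (n : ℕ) :
    riemannSum Ξ p (n + 1) = riemannSum Ξ p n + Ξ (p n) (p (n + 1)) :=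
  sum_range_succ _ n

theorem riemannSum_add_one_add (Ξ : ℝ → ℝ → W) (p : ℕ → ℝ) (j m : ℕ) :
    riemannSum Ξ p (j + 1 + m) =
      riemannSum Ξ p j + Ξ (p j) (p (j + 1)) + riemannSum Ξ (fun k => p (j + 1 + k)) m := by
  simp only [riemannSum, sum_range_add, sum_range_one, add_assoc, add_zero, zero_add]

theorem riemannSum_mul (Ξ : ℝ → ℝ → W) (p : ℕ → ℝ) (n m : ℕ) :
    riemannSum Ξ p (n * m) = ∑ k ∈ range n, riemannSum Ξ (fun i => p (k * m + i)) m := by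
  induction n with
  | zero => simp [riemannSum]
  | succ n ih =>
    rw [sum_range_succ, ← ih, Nat.succ_mul]
    simp only [riemannSum, sum_range_add, add_assoc]

end RiemannSum

theorem norm_riemannSum_add_one_add_sub_le {V : Type*} [SeminormedAddCommGroup V]
    (Ξ : ℝ → ℝ → V) (p : ℕ → ℝ) (j m : ℕ) :
    ‖riemannSum Ξ p (j + 1 + m) - Ξ (p 0) (p (j + 1 + m))‖ ≤
      ‖riemannSum Ξ p j - Ξ (p 0) (p j)‖
        + ‖riemannSum Ξ (fun k => p (j + 1 + k)) m - Ξ (p (j + 1)) (p (j + 1 + m))‖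
        + ‖Ξ (p 0) (p j) + Ξ (p j) (p (j + 1)) + Ξ (p (j + 1)) (p (j + 1 + m))
            - Ξ (p 0) (p (j + 1 + m))‖ := by
  rw [riemannSum_add_one_add]
  refine le_of_eq_of_le ?_ norm_add₃_le
  congr 1
  abel

structure IsSuperadditive (T : ℝ) (ω : ℝ → ℝ → ℝ) : Prop where
  nonneg : ∀ s t, 0 ≤ s → s ≤ t → t ≤ T → 0 ≤ ω s t
  superadd : ∀ r s t, 0 ≤ r → r ≤ s → s ≤ t → t ≤ T → ω r s + ω s t ≤ ω r t

namespace IsSuperadditive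

variable {T : ℝ} {ω : ℝ → ℝ → ℝ}

theorem self_eq_zero (hω : IsSuperadditive T ω) {t : ℝ} (ht : 0 ≤ t) (htT : t ≤ T) :
    ω t t = 0 := by
  linarith [hω.superadd t t t ht le_rfl le_rfl htT, hω.nonneg t t ht le_rfl htT]

theorem riemannSum_le (hω : IsSuperadditive T ω) {p : ℕ → ℝ} (hp : Monotone p)
    (hp0 : 0 ≤ p 0) {n : ℕ} (hpn : p n ≤ T) : riemannSum ω p n ≤ ω (p 0) (p n) := by
  induction n with
  | zero => simp [riemannSum, hω.self_eq_zero hp0 hpn]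
  | succ n ih =>
    have hn : p n ≤ p (n + 1) := hp n.le_succ
    rw [riemannSum_succ]
    linarith [ih (hn.trans hpn), hω.superadd _ _ _ hp0 (hp n.zero_le) hn hpn]

end IsSuperadditive

theorem riemannSum_rpow_le {ω : ℝ → ℝ → ℝ} {θ η : ℝ} (hθ : 1 ≤ θ) {p : ℕ → ℝ} {n : ℕ}
    (hnonneg : ∀ k < n, 0 ≤ ω (p k) (p (k + 1))) (hη : ∀ k < n, ω (p k) (p (k + 1)) ≤ η) :
    riemannSum (fun a b => ω a b ^ θ) p n ≤ η ^ (θ - 1) * riemannSum ω p n := by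
  rw [riemannSum, riemannSum, mul_sum]
  refine sum_le_sum fun k hk => ?_
  have h0 := hnonneg k (mem_range.1 hk)
  calc ω (p k) (p (k + 1)) ^ θ = ω (p k) (p (k + 1)) ^ (θ - 1) * ω (p k) (p (k + 1)) := by
        rw [← Real.rpow_add_one' h0 (by linarith), sub_add_cancel]
    _ ≤ η ^ (θ - 1) * ω (p k) (p (k + 1)) := by
        gcongr
        exact hη k (mem_range.1 hk)

noncomputable def sewingConst (θ : ℝ) : ℝ := 2 ^ θ / (2 ^ (θ - 1) - 1)

theorem one_lt_two_rpow_sub_one {θ : ℝ} (hθ : 1 < θ) : (1 : ℝ) < 2 ^ (θ - 1) :=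
  Real.one_lt_rpow (by norm_num) (by linarith)

theorem sewingConst_nonneg {θ : ℝ} (hθ : 1 < θ) : 0 ≤ sewingConst θ :=
  div_nonneg (by positivity) (by linarith [one_lt_two_rpow_sub_one hθ])

theorem two_mul_sewingConst_div_add_two {θ : ℝ} (hθ : 1 < θ) :
    2 * sewingConst θ / 2 ^ θ + 2 = sewingConst θ := by
  have h1 : (2 : ℝ) ^ (θ - 1) - 1 ≠ 0 := by linarith [one_lt_two_rpow_sub_one hθ]
  have h2 : (2 : ℝ) ^ θ = 2 ^ (θ - 1) * 2 := by
    rw [← Real.rpow_add_one (by norm_num), sub_add_cancel]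
  rw [sewingConst, h2]
  field_simp
  ring

theorem sewingConst_rpow_add_rpow_add_le {θ C x y M : ℝ} (hθ : 1 < θ) (hC : 0 ≤ C)
    (hx : 0 ≤ x) (hy : 0 ≤ y) (hxM : x ≤ M / 2) (hyM : y ≤ M / 2) :
    sewingConst θ * C * x ^ θ + sewingConst θ * C * y ^ θ + 2 * C * M ^ θ ≤
      sewingConst θ * C * M ^ θ := by
  have hKC : 0 ≤ sewingConst θ * C := mul_nonneg (sewingConst_nonneg hθ) hC
  calc sewingConst θ * C * x ^ θ + sewingConst θ * C * y ^ θ + 2 * C * M ^ θ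
      ≤ sewingConst θ * C * (M / 2) ^ θ + sewingConst θ * C * (M / 2) ^ θ + 2 * C * M ^ θ := by
        gcongr
    _ = (2 * sewingConst θ / 2 ^ θ + 2) * C * M ^ θ := by
        rw [Real.div_rpow (by linarith) (by norm_num)]
        ring
    _ = sewingConst θ * C * M ^ θ := by rw [two_mul_sewingConst_div_add_two hθ]

theorem exists_le_lt_succ {f : ℕ → ℝ} {c : ℝ} (h0 : f 0 ≤ c) {n : ℕ} (hn : 0 < n) :
    ∃ j < n, f j ≤ c ∧ (j + 1 < n → c < f (j + 1)) := by
  set j := Nat.findGreatest (fun i => f i ≤ c) (n - 1)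
  have hjn : j ≤ n - 1 := Nat.findGreatest_le _
  refine ⟨j, by omega, Nat.findGreatest_spec (P := fun i => f i ≤ c) (Nat.zero_le _) h0,
    fun hj1 => lt_of_not_ge ?_⟩
  exact Nat.findGreatest_is_greatest (P := fun i => f i ≤ c) (Nat.lt_succ_self _) (by omega)

def clampGrid (τ s t : ℝ) (k : ℕ) : ℝ := max s (min (k * τ) t)

section ClampGrid

variable {τ s t : ℝ}

theorem clampGrid_zero (hs : 0 ≤ s) (hst : s ≤ t) : clampGrid τ s t 0 = s := by
  simp [clampGrid, min_eq_left (hs.trans hst), hs]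

theorem clampGrid_div_self {T : ℝ} (hst : s ≤ t) (htT : t ≤ T) {N : ℕ} (hN : N ≠ 0) :
    clampGrid (T / N) s t N = t := by
  rw [clampGrid, mul_div_cancel₀ _ (Nat.cast_ne_zero.2 hN), min_eq_right htT, max_eq_right hst]

theorem monotone_clampGrid (hτ : 0 ≤ τ) : Monotone (clampGrid τ s t) := fun a b hab => by
  unfold clampGrid
  gcongr

theorem clampGrid_mem_Icc (hst : s ≤ t) (k : ℕ) : clampGrid τ s t k ∈ Set.Icc s t :=
  ⟨le_max_left _ _, max_le hst (min_le_right _ _)⟩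

theorem clampGrid_succ_sub_le (hτ : 0 ≤ τ) (k : ℕ) :
    clampGrid τ s t (k + 1) - clampGrid τ s t k ≤ τ := by
  simp only [clampGrid, Nat.cast_succ, max_def, min_def]
  split_ifs <;> nlinarith

theorem clampGrid_div_mul {M : ℕ} (hM : M ≠ 0) (k : ℕ) :
    clampGrid (τ / M) s t (k * M) = clampGrid τ s t k := by
  simp only [clampGrid, Nat.cast_mul]
  rw [mul_assoc, mul_div_cancel₀ _ (Nat.cast_ne_zero.2 hM)]

variable {T : ℝ} {ω : ℝ → ℝ → ℝ}

theorem IsSuperadditive.nonneg_clampGrid (hω : IsSuperadditive T ω) (hτ : 0 ≤ τ) (hs : 0 ≤ s)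
    (hst : s ≤ t) (ht : t ≤ T) (k : ℕ) :
    0 ≤ ω (clampGrid τ s t k) (clampGrid τ s t (k + 1)) :=
  hω.nonneg _ _ (hs.trans (clampGrid_mem_Icc hst k).1) (monotone_clampGrid hτ k.le_succ)
    ((clampGrid_mem_Icc hst _).2.trans ht)

theorem IsSuperadditive.riemannSum_clampGrid_le (hω : IsSuperadditive T ω) (hs : 0 ≤ s)
    (hst : s ≤ t) (ht : t ≤ T) {N : ℕ} (hN : N ≠ 0) :
    riemannSum ω (clampGrid (T / N) s t) N ≤ ω s t := by
  have hT : 0 ≤ T := hs.trans (hst.trans ht)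
  have h := hω.riemannSum_le (n := N) (monotone_clampGrid (τ := T / N) (by positivity))
    (by rw [clampGrid_zero hs hst]; exact hs) (by rw [clampGrid_div_self hst ht hN]; exact ht)
  rwa [clampGrid_zero hs hst, clampGrid_div_self hst ht hN] at h

end ClampGrid

def TendstoZeroAtDiag (T : ℝ) (ω : ℝ → ℝ → ℝ) : Prop :=
  ∀ t ∈ Set.Icc (0 : ℝ) T, Tendsto (fun p : ℝ × ℝ => ω p.1 p.2)
    (𝓝[{p : ℝ × ℝ | 0 ≤ p.1 ∧ p.1 ≤ p.2 ∧ p.2 ≤ T}] (t, t)) (𝓝 0)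

/-- Take a Lebesgue number of the cover of `[0, T]` by the balls around `x` on which
`ω < ε` near `(x, x)`. -/
theorem TendstoZeroAtDiag.exists_pos_forall_lt {T : ℝ} {ω : ℝ → ℝ → ℝ}
    (hω : TendstoZeroAtDiag T ω) {ε : ℝ} (hε : 0 < ε) :
    ∃ δ > 0, ∀ s t, 0 ≤ s → s ≤ t → t ≤ T → t - s < δ → ω s t < ε := by
  have hρ : ∀ x ∈ Set.Icc 0 T, ∃ ρ > 0, ∀ s t, 0 ≤ s → s ≤ t → t ≤ T →
      dist s x < ρ → dist t x < ρ → ω s t < ε := by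
    intro x hx
    obtain ⟨ρ, hρ, h⟩ := Metric.tendsto_nhdsWithin_nhds.1 (hω x hx) ε hε
    refine ⟨ρ, hρ, fun s t hs hst ht hsx htx => ?_⟩
    have := h (x := (s, t)) ⟨hs, hst, ht⟩ (by simp [Prod.dist_eq, hsx, htx])
    exact (le_abs_self _).trans_lt (by simpa [Real.dist_eq] using this)
  choose! ρ hρpos hρ using hρ
  obtain ⟨δ, hδ, hcover⟩ := lebesgue_number_lemma_of_metric (isCompact_Icc (a := 0) (b := T))
    (c := fun x : Set.Icc 0 T => Metric.ball (x : ℝ) (ρ x)) (fun _ => Metric.isOpen_ball)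
    (fun y hy => Set.mem_iUnion.2 ⟨⟨y, hy⟩, Metric.mem_ball_self (hρpos y hy)⟩)
  refine ⟨δ, hδ, fun s t hs hst ht hts => ?_⟩
  obtain ⟨x, hx⟩ := hcover s ⟨hs, hst.trans ht⟩
  refine hρ x x.2 s t hs hst ht (hx (Metric.mem_ball_self hδ)) (hx ?_)
  rw [Metric.mem_ball, Real.dist_eq, abs_lt]
  constructor <;> linarith

theorem exists_pos_rpow_mul_lt {α ε : ℝ} (W : ℝ) (hα : 0 < α) (hε : 0 < ε) :
    ∃ η > 0, η ^ α * W < ε := by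
  have h : Tendsto (fun η : ℝ => η ^ α * W) (𝓝[>] 0) (𝓝 0) := by
    have := (Real.continuousAt_rpow_const 0 α (Or.inr hα.le)).tendsto.mul_const W
    simpa [Real.zero_rpow hα.ne'] using this.mono_left nhdsWithin_le_nhds
  obtain ⟨η, hηε, hη⟩ := ((h.eventually (gt_mem_nhds hε)).and self_mem_nhdsWithin).exists
  exact ⟨η, hη, hηε⟩

section Grids

variable {T θ : ℝ} {ω : ℝ → ℝ → ℝ} {s t : ℝ}

theorem TendstoZeroAtDiag.eventually_clampGrid_le (hω₀ : TendstoZeroAtDiag T ω) (hs : 0 ≤ s)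
    (hst : s ≤ t) (ht : t ≤ T) {η : ℝ} (hη : 0 < η) :
    ∀ᶠ N : ℕ in atTop, ∀ k, ω (clampGrid (T / N) s t k) (clampGrid (T / N) s t (k + 1)) ≤ η := by
  have hT : 0 ≤ T := hs.trans (hst.trans ht)
  obtain ⟨δ, hδ, hsmall⟩ := hω₀.exists_pos_forall_lt hη
  filter_upwards [(tendsto_const_div_atTop_nhds_zero_nat T).eventually (gt_mem_nhds hδ)]
    with N hN k
  have hτ : 0 ≤ T / N := by positivity
  exact (hsmall _ _ (hs.trans (clampGrid_mem_Icc hst k).1) (monotone_clampGrid hτ k.le_succ)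
    ((clampGrid_mem_Icc hst _).2.trans ht) ((clampGrid_succ_sub_le hτ k).trans_lt hN)).le

theorem tendsto_riemannSum_rpow_clampGrid (hω : IsSuperadditive T ω)
    (hω₀ : TendstoZeroAtDiag T ω) (hθ : 1 < θ) (hs : 0 ≤ s) (hst : s ≤ t) (ht : t ≤ T) :
    Tendsto (fun N : ℕ => riemannSum (fun a b => ω a b ^ θ) (clampGrid (T / N) s t) N)
      atTop (𝓝 0) := by
  have hT : 0 ≤ T := hs.trans (hst.trans ht)
  have hnonneg : ∀ N : ℕ, 0 ≤ riemannSum (fun a b => ω a b ^ θ) (clampGrid (T / N) s t) N :=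
    fun N => sum_nonneg fun k _ =>
      Real.rpow_nonneg (hω.nonneg_clampGrid (by positivity) hs hst ht k) θ
  refine tendsto_order.2 ⟨fun a ha => Eventually.of_forall fun N => ha.trans_le (hnonneg N),
    fun ε hε => ?_⟩
  obtain ⟨η, hη, hηε⟩ := exists_pos_rpow_mul_lt (ω s t) (sub_pos.2 hθ) hε
  filter_upwards [hω₀.eventually_clampGrid_le hs hst ht hη, eventually_ne_atTop 0]
    with N hN hN0
  calc riemannSum (fun a b => ω a b ^ θ) (clampGrid (T / N) s t) N
      ≤ η ^ (θ - 1) * riemannSum ω (clampGrid (T / N) s t) N :=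
        riemannSum_rpow_le hθ.le (fun k _ => hω.nonneg_clampGrid (by positivity) hs hst ht k)
          (fun k _ => hN k)
    _ ≤ η ^ (θ - 1) * ω s t := by
        gcongr
        exact hω.riemannSum_clampGrid_le hs hst ht hN0
    _ < ε := hηε

end Grids

theorem cauchySeq_of_dist_mul_le {X : Type*} [PseudoMetricSpace X] {u : ℕ → X} {σ : ℕ → ℝ}
    (hσ : Tendsto σ atTop (𝓝 0)) (h : ∀ n m, 0 < m → dist (u (n * m)) (u n) ≤ σ n) :
    CauchySeq u := by
  refine Metric.cauchySeq_iff.2 fun ε hε => ?_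
  obtain ⟨N, hN⟩ := eventually_atTop.1 (hσ.eventually (gt_mem_nhds (half_pos hε)))
  refine ⟨max N 1, fun m hm n hn => ?_⟩
  calc dist (u m) (u n) ≤ dist (u (m * n)) (u m) + dist (u (n * m)) (u n) := by
        rw [mul_comm n m, dist_comm (u (m * n))]
        exact dist_triangle _ _ _
    _ ≤ σ m + σ n := add_le_add (h m n (by omega)) (h n m (by omega))
    _ < ε := by linarith [hN m (le_of_max_le_left hm), hN n (le_of_max_le_left hn)]

section Germ

variable {V : Type*} [NormedAddCommGroup V]

def DefectLE (T C θ : ℝ) (ω : ℝ → ℝ → ℝ) (Ξ : ℝ → ℝ → V) : Prop :=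
  ∀ r s t, 0 ≤ r → r ≤ s → s ≤ t → t ≤ T → ‖Ξ r t - Ξ r s - Ξ s t‖ ≤ C * ω r t ^ θ

noncomputable def sewing (Ξ : ℝ → ℝ → V) (T t : ℝ) : V :=
  limUnder atTop fun N : ℕ => riemannSum Ξ (clampGrid (T / N) 0 t) N

variable {T C θ : ℝ} {ω : ℝ → ℝ → ℝ} {Ξ : ℝ → ℝ → V}

namespace DefectLE

theorem self_eq_zero (hΞ : DefectLE T C θ ω Ξ) (hω : IsSuperadditive T ω) (hθ : θ ≠ 0)
    {t : ℝ} (ht : 0 ≤ t) (htT : t ≤ T) : Ξ t t = 0 := by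
  have h := hΞ t t t ht le_rfl le_rfl htT
  rwa [hω.self_eq_zero ht htT, Real.zero_rpow hθ, mul_zero, sub_self, zero_sub, norm_neg,
    norm_le_zero_iff] at h

theorem norm_add_add_sub_le (hΞ : DefectLE T C θ ω Ξ) (hω : IsSuperadditive T ω) (hθ : 0 ≤ θ)
    (hC : 0 ≤ C) {a u v b : ℝ} (ha : 0 ≤ a) (hau : a ≤ u) (huv : u ≤ v) (hvb : v ≤ b)
    (hb : b ≤ T) : ‖Ξ a u + Ξ u v + Ξ v b - Ξ a b‖ ≤ 2 * C * ω a b ^ θ := by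
  have hu : 0 ≤ u := ha.trans hau
  have hub : ω u b ^ θ ≤ ω a b ^ θ := by
    refine Real.rpow_le_rpow (hω.nonneg u b hu (huv.trans hvb) hb) ?_ hθ
    linarith [hω.superadd a u b ha hau (huv.trans hvb) hb, hω.nonneg a u ha hau (by linarith)]
  calc ‖Ξ a u + Ξ u v + Ξ v b - Ξ a b‖
      = ‖(Ξ a b - Ξ a u - Ξ u b) + (Ξ u b - Ξ u v - Ξ v b)‖ := by
        rw [← norm_neg]
        congr 1
        abel
    _ ≤ C * ω a b ^ θ + C * ω u b ^ θ :=
        (norm_add_le _ _).trans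
          (add_le_add (hΞ a u b ha hau (huv.trans hvb) hb) (hΞ u v b hu huv hvb hb))
    _ ≤ 2 * C * ω a b ^ θ := by nlinarith

theorem norm_riemannSum_sub_le (hΞ : DefectLE T C θ ω Ξ) (hω : IsSuperadditive T ω)
    (hθ : 1 < θ) (hC : 0 ≤ C) {p : ℕ → ℝ} (hp : Monotone p) (hp0 : 0 ≤ p 0) {n : ℕ}
    (hpn : p n ≤ T) :
    ‖riemannSum Ξ p n - Ξ (p 0) (p n)‖ ≤ sewingConst θ * C * ω (p 0) (p n) ^ θ := by
  induction n using Nat.strong_induction_on generalizing p with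
  | _ n ih =>
  have hp0i : ∀ i, 0 ≤ p i := fun i => hp0.trans (hp i.zero_le)
  rcases n.eq_zero_or_pos with rfl | hn
  · simp [riemannSum, hΞ.self_eq_zero hω (by linarith) hp0 hpn, hω.self_eq_zero hp0 hpn,
      Real.zero_rpow (by linarith : θ ≠ 0)]
  have hM : 0 ≤ ω (p 0) (p n) := hω.nonneg _ _ hp0 (hp n.zero_le) hpn
  obtain ⟨j, hjn, hj, hj1⟩ := exists_le_lt_succ (f := fun i => ω (p 0) (p i))
    (c := ω (p 0) (p n) / 2)
    (by simp only [hω.self_eq_zero hp0 ((hp n.zero_le).trans hpn)]; linarith) hn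
  obtain ⟨m, rfl⟩ : ∃ m, n = j + 1 + m := ⟨n - (j + 1), by omega⟩
  have hrest : ω (p (j + 1)) (p (j + 1 + m)) ≤ ω (p 0) (p (j + 1 + m)) / 2 := by
    rcases m.eq_zero_or_pos with rfl | hm
    · simp only [add_zero] at hM hpn ⊢
      rw [hω.self_eq_zero (hp0i _) hpn]
      linarith
    · linarith [hj1 (by omega), hω.superadd _ _ _ hp0 (hp (j + 1).zero_le)
        (hp (Nat.le_add_right _ m)) hpn]
  have hfirst := ih j (by omega) hp hp0 ((hp (by omega)).trans hpn)
  have hlast := ih m (by omega) (p := fun k => p (j + 1 + k))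
    (fun a b hab => hp (by omega)) (hp0i _) hpn
  simp only [add_zero] at hlast
  have hmid := hΞ.norm_add_add_sub_le hω (by linarith) hC hp0 (hp j.zero_le) (hp j.le_succ)
    (hp (Nat.le_add_right _ m)) hpn
  exact (norm_riemannSum_add_one_add_sub_le Ξ p j m).trans
    ((add_le_add_three hfirst hlast hmid).trans
      (sewingConst_rpow_add_rpow_add_le hθ hC (hω.nonneg _ _ hp0 (hp j.zero_le)
        ((hp (by omega)).trans hpn)) (hω.nonneg _ _ (hp0i _) (hp (Nat.le_add_right _ m)) hpn)
        hj hrest))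

theorem norm_riemannSum_clampGrid_sub_le (hΞ : DefectLE T C θ ω Ξ) (hω : IsSuperadditive T ω)
    (hθ : 1 < θ) (hC : 0 ≤ C) {s t : ℝ} (hs : 0 ≤ s) (hst : s ≤ t) (ht : t ≤ T) {N : ℕ}
    (hN : N ≠ 0) :
    ‖riemannSum Ξ (clampGrid (T / N) s t) N - Ξ s t‖ ≤ sewingConst θ * C * ω s t ^ θ := by
  have hT : 0 ≤ T := hs.trans (hst.trans ht)
  have h := hΞ.norm_riemannSum_sub_le hω hθ hC (n := N)
    (monotone_clampGrid (τ := T / N) (by positivity))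
    (by rw [clampGrid_zero hs hst]; exact hs) (by rw [clampGrid_div_self hst ht hN]; exact ht)
  rwa [clampGrid_zero hs hst, clampGrid_div_self hst ht hN] at h

theorem norm_riemannSum_mul_sub_le (hΞ : DefectLE T C θ ω Ξ) (hω : IsSuperadditive T ω)
    (hθ : 1 < θ) (hC : 0 ≤ C) {q : ℕ → ℝ} (hq : Monotone q) (hq0 : 0 ≤ q 0) {N M : ℕ}
    (hqT : q (N * M) ≤ T) :
    ‖riemannSum Ξ q (N * M) - riemannSum Ξ (fun k => q (k * M)) N‖ ≤
      sewingConst θ * C * riemannSum (fun a b => ω a b ^ θ) (fun k => q (k * M)) N := by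
  rw [riemannSum_mul, riemannSum, riemannSum, mul_sum, ← sum_sub_distrib]
  refine (norm_sum_le _ _).trans (sum_le_sum fun k hk => ?_)
  have hkM : k * M + M = (k + 1) * M := by ring
  have hkN : (k + 1) * M ≤ N * M := Nat.mul_le_mul_right M (mem_range.1 hk)
  have := hΞ.norm_riemannSum_sub_le hω hθ hC (p := fun i => q (k * M + i))
    (fun a b hab => hq (by omega)) (hq0.trans (hq (Nat.zero_le _))) (n := M)
    (by simpa only [hkM] using (hq hkN).trans hqT)
  simpa only [add_zero, hkM] using this

theorem cauchySeq_riemannSum_clampGrid (hΞ : DefectLE T C θ ω Ξ) (hω : IsSuperadditive T ω)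
    (hω₀ : TendstoZeroAtDiag T ω) (hθ : 1 < θ) (hC : 0 ≤ C) {t : ℝ} (ht0 : 0 ≤ t)
    (ht : t ≤ T) : CauchySeq fun N : ℕ => riemannSum Ξ (clampGrid (T / N) 0 t) N := by
  have hT : 0 ≤ T := ht0.trans ht
  refine cauchySeq_of_dist_mul_le (by simpa using
    (tendsto_riemannSum_rpow_clampGrid hω hω₀ hθ le_rfl ht0 ht).const_mul (sewingConst θ * C))
    fun N M hM => ?_
  have hcoarse : (fun k => clampGrid (T / ↑(N * M)) 0 t (k * M)) = clampGrid (T / N) 0 t := by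
    funext k
    rw [Nat.cast_mul, ← div_div, clampGrid_div_mul hM.ne']
  rw [dist_eq_norm, ← hcoarse]
  exact hΞ.norm_riemannSum_mul_sub_le hω hθ hC (monotone_clampGrid (by positivity))
    (by rw [clampGrid_zero le_rfl ht0]) ((clampGrid_mem_Icc ht0 _).2.trans ht)

/-- With `x = k τ`, `y = (k + 1) τ`: the grids on `[0, s]`, `[s, t]` and `[0, t]` only differ on
the interval `[x, y]` containing `s`, where the difference is the defect at `(x, s, y)`. -/
theorem norm_clamp_sub_sub_le (hΞ : DefectLE T C θ ω Ξ) (hω : IsSuperadditive T ω)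
    (hθ : 0 < θ) (hC : 0 ≤ C) {s t x y : ℝ} (hs : 0 ≤ s) (hst : s ≤ t) (ht : t ≤ T)
    (hx : 0 ≤ x) (hxy : x ≤ y) :
    ‖Ξ (max 0 (min x t)) (max 0 (min y t)) - Ξ (max 0 (min x s)) (max 0 (min y s))
        - Ξ (max s (min x t)) (max s (min y t))‖ ≤
      C * ω (max 0 (min x t)) (max 0 (min y t)) ^ θ := by
  have hΞs : Ξ s s = 0 := hΞ.self_eq_zero hω hθ.ne' hs (hst.trans ht)
  have hy : 0 ≤ y := hx.trans hxy
  have hrhs : 0 ≤ C * ω (max 0 (min x t)) (max 0 (min y t)) ^ θ := by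
    refine mul_nonneg hC (Real.rpow_nonneg (hω.nonneg _ _ (le_max_left _ _) ?_ ?_) θ)
    · gcongr
    · exact max_le (hs.trans (hst.trans ht)) ((min_le_right _ _).trans ht)
  simp only [max_eq_right (le_min hx (hs.trans hst)), max_eq_right (le_min hy (hs.trans hst)),
    max_eq_right (le_min hx hs), max_eq_right (le_min hy hs)] at hrhs ⊢
  rcases le_or_gt y s with hys | hsy
  · have hxs := hxy.trans hys
    rw [min_eq_left hxs, min_eq_left hys, min_eq_left (hxs.trans hst),
      min_eq_left (hys.trans hst), max_eq_left hxs, max_eq_left hys, hΞs]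
    simpa [min_eq_left (hxs.trans hst), min_eq_left (hys.trans hst)] using hrhs
  rcases le_or_gt x s with hxs | hsx
  · rw [min_eq_left hxs, min_eq_right hsy.le, min_eq_left (hxs.trans hst), max_eq_left hxs,
      max_eq_right (le_min hsy.le hst)]
    exact hΞ _ _ _ hx hxs (le_min hsy.le hst) ((min_le_right _ _).trans ht)
  · rw [min_eq_right hsx.le, min_eq_right hsy.le, max_eq_right (le_min hsx.le hst),
      max_eq_right (le_min hsy.le hst), hΞs]
    simpa using hrhs

theorem norm_riemannSum_clampGrid_sub_sub_le (hΞ : DefectLE T C θ ω Ξ)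
    (hω : IsSuperadditive T ω) (hθ : 0 < θ) (hC : 0 ≤ C) {τ s t : ℝ} (hτ : 0 ≤ τ)
    (hs : 0 ≤ s) (hst : s ≤ t) (ht : t ≤ T) (N : ℕ) :
    ‖riemannSum Ξ (clampGrid τ 0 t) N - riemannSum Ξ (clampGrid τ 0 s) N
        - riemannSum Ξ (clampGrid τ s t) N‖ ≤
      C * riemannSum (fun a b => ω a b ^ θ) (clampGrid τ 0 t) N := by
  simp only [riemannSum, ← sum_sub_distrib, mul_sum]
  exact (norm_sum_le _ _).trans (sum_le_sum fun k _ =>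
    hΞ.norm_clamp_sub_sub_le hω hθ hC hs hst ht (by positivity) (by gcongr; simp))

theorem sewing_zero (hΞ : DefectLE T C θ ω Ξ) (hω : IsSuperadditive T ω) (hθ : θ ≠ 0)
    (hT : 0 ≤ T) : sewing Ξ T 0 = 0 := by
  have hsum : (fun N : ℕ => riemannSum Ξ (clampGrid (T / N) 0 0) N) = fun _ => 0 := by
    funext N
    simp [riemannSum, clampGrid, hΞ.self_eq_zero hω hθ le_rfl hT]
  rw [sewing, hsum]
  exact tendsto_const_nhds.limUnder_eq

theorem norm_sewing_sub_sub_le [CompleteSpace V] (hΞ : DefectLE T C θ ω Ξ)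
    (hω : IsSuperadditive T ω) (hω₀ : TendstoZeroAtDiag T ω) (hθ : 1 < θ) (hC : 0 ≤ C)
    {s t : ℝ} (hs : 0 ≤ s) (hst : s ≤ t) (ht : t ≤ T) :
    ‖sewing Ξ T t - sewing Ξ T s - Ξ s t‖ ≤ sewingConst θ * C * ω s t ^ θ := by
  have hT : 0 ≤ T := hs.trans (hst.trans ht)
  have hlim : ∀ u, 0 ≤ u → u ≤ T → Tendsto (fun N : ℕ => riemannSum Ξ (clampGrid (T / N) 0 u) N)
      atTop (𝓝 (sewing Ξ T u)) := fun u hu huT =>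
    (hΞ.cauchySeq_riemannSum_clampGrid hω hω₀ hθ hC hu huT).tendsto_limUnder
  have hσ := (tendsto_riemannSum_rpow_clampGrid hω hω₀ hθ le_rfl (hs.trans hst) ht).const_mul C
  rw [mul_zero] at hσ
  refine le_of_tendsto_of_tendsto
    (((hlim t (hs.trans hst) ht).sub (hlim s hs (hst.trans ht))).sub tendsto_const_nhds).norm
    (by simpa using tendsto_const_nhds.add hσ) ?_
  filter_upwards [eventually_ne_atTop 0] with N hN
  rw [← sub_add_sub_cancel _ (riemannSum Ξ (clampGrid (T / N) s t) N), add_comm]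
  exact (norm_add_le _ _).trans
    (add_le_add (hΞ.norm_riemannSum_clampGrid_sub_le hω hθ hC hs hst ht hN)
      (hΞ.norm_riemannSum_clampGrid_sub_sub_le hω (by linarith) hC (by positivity) hs hst ht N))

end DefectLE

theorem eqOn_of_norm_sub_sub_le (hω : IsSuperadditive T ω) (hω₀ : TendstoZeroAtDiag T ω)
    (hθ : 1 < θ) {f g : ℝ → V} {L : ℝ}
    (hf : ∀ s t, 0 ≤ s → s ≤ t → t ≤ T → ‖f t - f s - Ξ s t‖ ≤ L * ω s t ^ θ)
    (hg : ∀ s t, 0 ≤ s → s ≤ t → t ≤ T → ‖g t - g s - Ξ s t‖ ≤ L * ω s t ^ θ)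
    (h0 : f 0 = g 0) {t : ℝ} (ht : t ∈ Set.Icc 0 T) : f t = g t := by
  obtain ⟨ht0, htT⟩ := ht
  have hT : 0 ≤ T := ht0.trans htT
  have hσ := (tendsto_riemannSum_rpow_clampGrid hω hω₀ hθ le_rfl ht0 htT).const_mul (2 * L)
  rw [mul_zero] at hσ
  have hbound : ∀ N : ℕ, N ≠ 0 → ‖(f t - g t) - (f 0 - g 0)‖ ≤
      2 * L * riemannSum (fun a b => ω a b ^ θ) (clampGrid (T / N) 0 t) N := by
    intro N hN
    set G := clampGrid (T / N) 0 t
    have hτ : 0 ≤ T / N := by positivity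
    have hGN : G N = t := clampGrid_div_self ht0 htT hN
    have hG0 : G 0 = 0 := clampGrid_zero le_rfl ht0
    have htel := sum_range_sub (fun k => f (G k) - g (G k)) N
    rw [hGN, hG0] at htel
    rw [← htel, riemannSum, mul_sum]
    refine (norm_sum_le _ _).trans (sum_le_sum fun k _ => ?_)
    have hGk : 0 ≤ G k := (clampGrid_mem_Icc ht0 k).1
    have hGk1 : G (k + 1) ≤ T := (clampGrid_mem_Icc ht0 _).2.trans htT
    calc ‖f (G (k + 1)) - g (G (k + 1)) - (f (G k) - g (G k))‖
        = ‖(f (G (k + 1)) - f (G k) - Ξ (G k) (G (k + 1)))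
            - (g (G (k + 1)) - g (G k) - Ξ (G k) (G (k + 1)))‖ := by congr 1; abel
      _ ≤ L * ω (G k) (G (k + 1)) ^ θ + L * ω (G k) (G (k + 1)) ^ θ :=
          norm_sub_le_of_le (hf _ _ hGk (monotone_clampGrid hτ k.le_succ) hGk1)
            (hg _ _ hGk (monotone_clampGrid hτ k.le_succ) hGk1)
      _ = 2 * L * ω (G k) (G (k + 1)) ^ θ := by ring
  have hzero := ge_of_tendsto hσ ((eventually_ne_atTop 0).mono hbound)
  rw [norm_le_zero_iff, h0, sub_self, sub_zero] at hzero
  exact sub_eq_zero.1 hzero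

end Germ

end Sewing

open Sewing

theorem additive_sewing_lemma_general
    {V : Type*} [NormedAddCommGroup V] [CompleteSpace V]
    (T θ C : ℝ) (hT : 0 < T) (hθ : 1 < θ) (hC : 0 ≤ C)
    (ω : ℝ → ℝ → ℝ)
    (hω_nonneg : ∀ s t, 0 ≤ s → s ≤ t → t ≤ T → 0 ≤ ω s t)
    (hω_superadd : ∀ r s t, 0 ≤ r → r ≤ s → s ≤ t → t ≤ T →
      ω r s + ω s t ≤ ω r t)
    (hω_cont : ∀ t ∈ Set.Icc (0 : ℝ) T,
      Filter.Tendsto (fun p : ℝ × ℝ => ω p.1 p.2)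
        (nhdsWithin (t, t) {p : ℝ × ℝ | 0 ≤ p.1 ∧ p.1 ≤ p.2 ∧ p.2 ≤ T})
        (nhds 0))
    (Ξ : ℝ → ℝ → V)
    (hΞ : ∀ r s t, 0 ≤ r → r ≤ s → s ≤ t → t ≤ T →
      ‖Ξ r t - Ξ r s - Ξ s t‖ ≤ C * ω r t ^ θ) :
    ∃ I : ℝ → V, I 0 = 0 ∧
      (∀ s t, 0 ≤ s → s ≤ t → t ≤ T →
        ‖I t - I s - Ξ s t‖ ≤ 2 ^ θ / (2 ^ (θ - 1) - 1) * C * ω s t ^ θ) ∧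
      ∀ J : ℝ → V, J 0 = 0 →
        (∀ s t, 0 ≤ s → s ≤ t → t ≤ T →
          ‖J t - J s - Ξ s t‖ ≤ 2 ^ θ / (2 ^ (θ - 1) - 1) * C * ω s t ^ θ) →
        ∀ t ∈ Set.Icc (0 : ℝ) T, J t = I t := by
  have hω : IsSuperadditive T ω := ⟨hω_nonneg, hω_superadd⟩
  have hΞ : DefectLE T C θ ω Ξ := hΞ
  have hI0 := hΞ.sewing_zero hω (by linarith) hT.le
  have hI : ∀ s t, 0 ≤ s → s ≤ t → t ≤ T →
      ‖sewing Ξ T t - sewing Ξ T s - Ξ s t‖ ≤ sewingConst θ * C * ω s t ^ θ :=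
    fun s t hs hst ht => hΞ.norm_sewing_sub_sub_le hω hω_cont hθ hC hs hst ht
  exact ⟨sewing Ξ T, hI0, hI, fun J hJ0 hJ t ht =>
    eqOn_of_norm_sub_sub_le hω hω_cont hθ hJ hI (hJ0.trans hI0.symm) ht⟩

/-- Additive sewing lemma: a germ `Ξ` whose additivity defect is bounded by
`C ω^θ` with `θ > 1` is approximated by a unique genuine additive path `I`
vanishing at `0`, with `|I_t − I_s − Ξ(s,t)| ≤ K C ω(s,t)^θ`,
`K = 2^θ/(2^{θ−1} − 1)`. -/
theorem additive_sewing_lemma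
    {V : Type*} [NormedAddCommGroup V] [NormedSpace ℝ V] [CompleteSpace V]
    (T θ C : ℝ) (hT : 0 < T) (hθ : 1 < θ) (hC : 0 ≤ C)
    (ω : ℝ → ℝ → ℝ)
    (hω_nonneg : ∀ s t, 0 ≤ s → s ≤ t → t ≤ T → 0 ≤ ω s t)
    (hω_superadd : ∀ r s t, 0 ≤ r → r ≤ s → s ≤ t → t ≤ T →
      ω r s + ω s t ≤ ω r t)
    (hω_diag : ∀ t, 0 ≤ t → t ≤ T → ω t t = 0)
    (hω_cont : ∀ t ∈ Set.Icc (0 : ℝ) T,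
      Filter.Tendsto (fun p : ℝ × ℝ => ω p.1 p.2)
        (nhdsWithin (t, t) {p : ℝ × ℝ | 0 ≤ p.1 ∧ p.1 ≤ p.2 ∧ p.2 ≤ T})
        (nhds 0))
    (Ξ : ℝ → ℝ → V)
    (hΞ : ∀ r s t, 0 ≤ r → r ≤ s → s ≤ t → t ≤ T →
      ‖Ξ r t - Ξ r s - Ξ s t‖ ≤ C * ω r t ^ θ) :
    ∃ I : ℝ → V, I 0 = 0 ∧
      (∀ s t, 0 ≤ s → s ≤ t → t ≤ T →
        ‖I t - I s - Ξ s t‖ ≤ 2 ^ θ / (2 ^ (θ - 1) - 1) * C * ω s t ^ θ) ∧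
      ∀ J : ℝ → V, J 0 = 0 →
        (∀ s t, 0 ≤ s → s ≤ t → t ≤ T →
          ‖J t - J s - Ξ s t‖ ≤ 2 ^ θ / (2 ^ (θ - 1) - 1) * C * ω s t ^ θ) →
        ∀ t ∈ Set.Icc (0 : ℝ) T, J t = I t :=
  additive_sewing_lemma_general T θ C hT hθ hC ω hω_nonneg hω_superadd hω_cont Ξ hΞ
end

section
/- (Composition of a C^{1+γ} function with a CRP) Let f ∈ C^{1+γ}(V,W) (f bounded with bounded Lipschitz-γ derivative Df) and let y be a controlled rough path over x with values in V: y_{s,t} = y†_s x¹_{s,t} + y♯_{s,t}, ‖y†‖_q < ∞, ‖y♯‖_r < ∞. Define Y_t := f(y_t), Y†_t := Df(y_t) y†_t, and Y♯_{s,t} := Y_{s,t} − Y†_s x¹_{s,t}. Then Y♯_{s,t} = Df(y_s) y♯_{s,t} + ∫_0^1 (Df(y_s + θ y_{s,t}) − Df(y_s)) y_{s,t} dθ, and the bounds |Y♯_{s,t}| ≤ ‖Df‖_∞ ‖y♯‖_r ω(s,t)^{1/r} + ‖Df‖_γ ‖y‖_p^{1+γ} ω(s,t)^{(1+γ)/p}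 and |Y†_t − Y†_s| ≤ ‖Df‖_γ |y_{s,t}|^γ ‖y†‖_∞ + ‖Df‖_∞ |y†_{s,t}| hold. Hence Y is a controlled rough path with exponents (p, max(q, p/γ), max(r, p/(1+γ))). -/
open Real in
lemma aux_cont_of_holder {V W' : Type*} [NormedAddCommGroup V] [NormedAddCommGroup W']
    {γ Hγ : ℝ} (hγ0 : 0 < γ) (g : V → W')
    (h : ∀ a b, ‖g a - g b‖ ≤ Hγ * ‖a - b‖ ^ γ) : Continuous g := by
  rw [continuous_iff_continuousAt]
  intro v
  rw [ContinuousAt, tendsto_iff_norm_sub_tendsto_zero]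
  have hnorm : Filter.Tendsto (fun v' : V => ‖v' - v‖) (nhds v) (nhds 0) := by
    simpa using (tendsto_iff_norm_sub_tendsto_zero.1 (Filter.tendsto_id (α := V) (x := nhds v)))
  have h2 : Filter.Tendsto (fun v' : V => Hγ * ‖v' - v‖ ^ γ) (nhds v) (nhds 0) := by
    have := ((Real.continuousAt_rpow_const 0 γ (Or.inr hγ0.le)).tendsto).comp hnorm
    rw [Real.zero_rpow hγ0.ne'] at this
    simpa using this.const_mul Hγ
  exact squeeze_zero (fun v' => norm_nonneg _) (fun v' => h v' v) h2

lemma aux_taylor {V W : Type*} [NormedAddCommGroup V] [NormedSpace ℝ V]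
    [NormedAddCommGroup W] [NormedSpace ℝ W] [CompleteSpace W]
    (f : V → W) (Df : V → (V →L[ℝ] W)) (hf : ∀ v, HasFDerivAt f (Df v) v)
    (hcont : Continuous Df) (a b : V) :
    f b - f a = ∫ θ in (0:ℝ)..1, Df (a + θ • (b - a)) (b - a) := by
  have hline : ∀ θ : ℝ, HasDerivAt (fun θ : ℝ => a + θ • (b - a)) (b - a) θ := by
    intro θ
    simpa using ((hasDerivAt_id θ).smul_const (b - a)).const_add a
  have hg : ∀ θ ∈ Set.uIcc (0:ℝ) 1,
      HasDerivAt (fun θ : ℝ => f (a + θ • (b - a))) (Df (a + θ • (b - a)) (b - a)) θ :=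
    fun θ _ => (hf _).comp_hasDerivAt θ (hline θ)
  have hint : IntervalIntegrable (fun θ : ℝ => Df (a + θ • (b - a)) (b - a))
      MeasureTheory.volume 0 1 := by
    apply Continuous.intervalIntegrable
    exact (ContinuousLinearMap.apply ℝ W (b - a)).continuous.comp
      (hcont.comp (by continuity))
  have := intervalIntegral.integral_eq_sub_of_hasDerivAt hg hint
  rw [this]; simp

lemma aux_interp {x K e e' : ℝ} (hx : 0 ≤ x) (hxK : x ≤ K) (hK : 1 ≤ K)
    (he' : 0 < e') (hee : e' ≤ e) : x ^ e ≤ K ^ (e - e') * x ^ e' := by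
  rcases eq_or_lt_of_le hx with h0 | h0
  · rw [← h0, Real.zero_rpow (by linarith), Real.zero_rpow he'.ne', mul_zero]
  · have hxe : x ^ e = x ^ (e - e') * x ^ e' := by
      rw [← Real.rpow_add h0]; ring_nf
    rw [hxe]
    exact mul_le_mul_of_nonneg_right
      (Real.rpow_le_rpow hx hxK (by linarith)) (Real.rpow_nonneg hx _)

lemma aux_rpow_mul_self {a b γ : ℝ} (ha : 0 ≤ a) (hab : a ≤ b) (hγ : 0 < γ) :
    a ^ γ * a ≤ b ^ (1 + γ) := by
  have hb : 0 ≤ b := ha.trans hab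
  calc a ^ γ * a ≤ b ^ γ * b := by
        exact mul_le_mul (Real.rpow_le_rpow ha hab hγ.le) hab ha (Real.rpow_nonneg hb _)
    _ = b ^ (1 + γ) := by
        rw [Real.rpow_add' hb (by linarith), Real.rpow_one]; ring


set_option maxHeartbeats 1000000 in
/-- Composition of a `C^{1+γ}` function with a controlled rough path:
`Y = f∘y` is again a controlled rough path with Gubinelli derivative
`Y† = Df(y) y†`, remainder
`Y♯_{s,t} = Df(y_s) y♯_{s,t} + ∫₀¹ (Df(y_s+θ y_{s,t}) − Df(y_s)) y_{s,t} dθ`,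
and the stated bounds on `Y♯` and on the increments of `Y†`; hence `Y` is
controlled with exponents `(p, max(q, p/γ), max(r, p/(1+γ)))`. -/
theorem omega_crp_composition
    {U V W : Type*} [NormedAddCommGroup U] [NormedSpace ℝ U]
    [NormedAddCommGroup V] [NormedSpace ℝ V]
    [NormedAddCommGroup W] [NormedSpace ℝ W] [CompleteSpace W]
    (T p q r γ M Hγ Cx Cp' Cq Cr Dsup : ℝ)
    (hT : 0 < T) (hp2 : 2 ≤ p) (hp3 : p < 3) (hq : 1 ≤ q) (hr : 1 ≤ r)
    (hγ0 : 0 < γ) (hγ1 : γ ≤ 1)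
    (hM : 0 ≤ M) (hHγ : 0 ≤ Hγ) (hCx : 0 ≤ Cx) (hCp' : 0 ≤ Cp')
    (hCq : 0 ≤ Cq) (hCr : 0 ≤ Cr)
    (ω : ℝ → ℝ → ℝ)
    (hω_nonneg : ∀ s t, 0 ≤ s → s ≤ t → t ≤ T → 0 ≤ ω s t)
    (hω_superadd : ∀ a b c, 0 ≤ a → a ≤ b → b ≤ c → c ≤ T →
      ω a b + ω b c ≤ ω a c)
    (hω_mono : ∀ s t s' t', 0 ≤ s' → s' ≤ s → s ≤ t → t ≤ t' → t' ≤ T →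
      ω s t ≤ ω s' t')
    (f : V → W) (Df : V → (V →L[ℝ] W))
    (hf_deriv : ∀ v, HasFDerivAt f (Df v) v)
    (hDf_bdd : ∀ v, ‖Df v‖ ≤ M)
    (hDf_hold : ∀ a b, ‖Df a - Df b‖ ≤ Hγ * ‖a - b‖ ^ γ)
    (x1 : ℝ → ℝ → U)
    (hx1 : ∀ s t, 0 ≤ s → s ≤ t → t ≤ T → ‖x1 s t‖ ≤ Cx * ω s t ^ (1 / p))
    (y : ℝ → V) (yd : ℝ → (U →L[ℝ] V))
    (hyp : ∀ s t, 0 ≤ s → s ≤ t → t ≤ T → ‖y t - y s‖ ≤ Cp' * ω s t ^ (1 / p))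
    (hyd : ∀ s t, 0 ≤ s → s ≤ t → t ≤ T → ‖yd t - yd s‖ ≤ Cq * ω s t ^ (1 / q))
    (hysharp : ∀ s t, 0 ≤ s → s ≤ t → t ≤ T →
      ‖y t - y s - yd s (x1 s t)‖ ≤ Cr * ω s t ^ (1 / r))
    (hydsup : ∀ t, 0 ≤ t → t ≤ T → ‖yd t‖ ≤ Dsup) :
    -- the identity for the remainder `Y♯_{s,t}`
    (∀ s t, 0 ≤ s → s ≤ t → t ≤ T →
      f (y t) - f (y s) - ((Df (y s)).comp (yd s)) (x1 s t)
        = Df (y s) (y t - y s - yd s (x1 s t))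
          + ∫ θ in (0:ℝ)..1,
              (Df (y s + θ • (y t - y s)) - Df (y s)) (y t - y s)) ∧
    -- bound on `Y♯`
    (∀ s t, 0 ≤ s → s ≤ t → t ≤ T →
      ‖f (y t) - f (y s) - ((Df (y s)).comp (yd s)) (x1 s t)‖ ≤
        M * Cr * ω s t ^ (1 / r)
          + Hγ * Cp' ^ (1 + γ) * ω s t ^ ((1 + γ) / p)) ∧
    -- bound on the increments of `Y† = Df(y) y†`
    (∀ s t, 0 ≤ s → s ≤ t → t ≤ T →
      ‖(Df (y t)).comp (yd t) - (Df (y s)).comp (yd s)‖ ≤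
        Hγ * ‖y t - y s‖ ^ γ * Dsup + M * ‖yd t - yd s‖) ∧
    -- hence `Y` is a controlled rough path with exponents
    -- `(p, max(q, p/γ), max(r, p/(1+γ)))`
    (∃ C1 C2 : ℝ, 0 ≤ C1 ∧ 0 ≤ C2 ∧
      (∀ s t, 0 ≤ s → s ≤ t → t ≤ T →
        ‖(Df (y t)).comp (yd t) - (Df (y s)).comp (yd s)‖ ≤
          C1 * ω s t ^ (1 / max q (p / γ))) ∧
      (∀ s t, 0 ≤ s → s ≤ t → t ≤ T →
        ‖f (y t) - f (y s) - ((Df (y s)).comp (yd s)) (x1 s t)‖ ≤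
          C2 * ω s t ^ (1 / max r (p / (1 + γ))))) := by

  -- continuity of Df
  have hcont : Continuous Df := aux_cont_of_holder hγ0 Df hDf_hold
  have hp0 : (0:ℝ) < p := by linarith
  have h1γ : (0:ℝ) < 1 + γ := by linarith
  have hDsup : 0 ≤ Dsup := (norm_nonneg _).trans (hydsup 0 le_rfl hT.le)
  -- part 1: the identity
  have key1 : ∀ s t, 0 ≤ s → s ≤ t → t ≤ T →
      f (y t) - f (y s) - ((Df (y s)).comp (yd s)) (x1 s t)
        = Df (y s) (y t - y s - yd s (x1 s t))
          + ∫ θ in (0:ℝ)..1,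
              (Df (y s + θ • (y t - y s)) - Df (y s)) (y t - y s) := by
    intro s t hs hst htT
    have hft : f (y t) - f (y s) = ∫ θ in (0:ℝ)..1, Df (y s + θ • (y t - y s)) (y t - y s) :=
      aux_taylor f Df hf_deriv hcont (y s) (y t)
    have hint : IntervalIntegrable (fun θ : ℝ => (Df (y s + θ • (y t - y s)) - Df (y s)) (y t - y s))
        MeasureTheory.volume 0 1 := by
      apply Continuous.intervalIntegrable
      exact (ContinuousLinearMap.apply ℝ W (y t - y s)).continuous.comp
        ((hcont.comp (by continuity)).sub continuous_const)
    have hsplit : ∫ θ in (0:ℝ)..1, Df (y s + θ • (y t - y s)) (y t - y s)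
        = Df (y s) (y t - y s) + ∫ θ in (0:ℝ)..1, (Df (y s + θ • (y t - y s)) - Df (y s)) (y t - y s) := by
      have hcongr : ∀ θ ∈ Set.uIcc (0:ℝ) 1, Df (y s + θ • (y t - y s)) (y t - y s)
          = Df (y s) (y t - y s) + (Df (y s + θ • (y t - y s)) - Df (y s)) (y t - y s) := by
        intro θ _; simp
      rw [intervalIntegral.integral_congr hcongr,
        intervalIntegral.integral_add intervalIntegrable_const hint,
        intervalIntegral.integral_const]
      simp
    rw [ContinuousLinearMap.comp_apply, hft, hsplit]
    generalize (∫ θ in (0:ℝ)..1, (Df (y s + θ • (y t - y s)) - Df (y s)) (y t - y s)) = I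
    simp only [map_sub]
    abel
  -- part 2: the bound on the remainder
  have key2 : ∀ s t, 0 ≤ s → s ≤ t → t ≤ T →
      ‖f (y t) - f (y s) - ((Df (y s)).comp (yd s)) (x1 s t)‖ ≤
        M * Cr * ω s t ^ (1 / r)
          + Hγ * Cp' ^ (1 + γ) * ω s t ^ ((1 + γ) / p) := by
    intro s t hs hst htT
    rw [key1 s t hs hst htT]
    have hω := hω_nonneg s t hs hst htT
    set Δ := y t - y s with hΔ
    have hΔle : ‖Δ‖ ≤ Cp' * ω s t ^ (1 / p) := hyp s t hs hst htT
    have hterm1 : ‖Df (y s) (y t - y s - yd s (x1 s t))‖ ≤ M * Cr * ω s t ^ (1 / r) := by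
      calc ‖Df (y s) (y t - y s - yd s (x1 s t))‖
          ≤ ‖Df (y s)‖ * ‖y t - y s - yd s (x1 s t)‖ := (Df (y s)).le_opNorm _
        _ ≤ M * (Cr * ω s t ^ (1 / r)) := by
            apply mul_le_mul (hDf_bdd _) (hysharp s t hs hst htT) (norm_nonneg _) hM
        _ = M * Cr * ω s t ^ (1 / r) := by ring
    have hterm2 : ‖∫ θ in (0:ℝ)..1, (Df (y s + θ • Δ) - Df (y s)) Δ‖
        ≤ Hγ * Cp' ^ (1 + γ) * ω s t ^ ((1 + γ) / p) := by
      have hbd : ∀ θ ∈ Set.uIoc (0:ℝ) 1,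
          ‖(Df (y s + θ • Δ) - Df (y s)) Δ‖ ≤ Hγ * ‖Δ‖ ^ γ * ‖Δ‖ := by
        intro θ hθ
        rw [Set.uIoc_of_le (by norm_num : (0:ℝ) ≤ 1)] at hθ
        calc ‖(Df (y s + θ • Δ) - Df (y s)) Δ‖
            ≤ ‖Df (y s + θ • Δ) - Df (y s)‖ * ‖Δ‖ :=
              (Df (y s + θ • Δ) - Df (y s)).le_opNorm _
          _ ≤ (Hγ * ‖θ • Δ‖ ^ γ) * ‖Δ‖ := by
              apply mul_le_mul_of_nonneg_right _ (norm_nonneg _)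
              simpa using hDf_hold (y s + θ • Δ) (y s)
          _ ≤ Hγ * ‖Δ‖ ^ γ * ‖Δ‖ := by
              apply mul_le_mul_of_nonneg_right _ (norm_nonneg _)
              apply mul_le_mul_of_nonneg_left _ hHγ
              apply Real.rpow_le_rpow (norm_nonneg _) _ hγ0.le
              rw [norm_smul, Real.norm_eq_abs, abs_of_pos hθ.1]
              nlinarith [norm_nonneg Δ, hθ.2]
      calc ‖∫ θ in (0:ℝ)..1, (Df (y s + θ • Δ) - Df (y s)) Δ‖
          ≤ Hγ * ‖Δ‖ ^ γ * ‖Δ‖ * |1 - 0| :=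
            intervalIntegral.norm_integral_le_of_norm_le_const hbd
        _ = Hγ * (‖Δ‖ ^ γ * ‖Δ‖) := by rw [show |(1:ℝ) - 0| = 1 by norm_num]; ring
        _ ≤ Hγ * ((Cp' * ω s t ^ (1 / p)) ^ (1 + γ)) := by
            apply mul_le_mul_of_nonneg_left
              (aux_rpow_mul_self (norm_nonneg _) hΔle hγ0) hHγ
        _ = Hγ * Cp' ^ (1 + γ) * ω s t ^ ((1 + γ) / p) := by
            rw [Real.mul_rpow hCp' (Real.rpow_nonneg hω _),
              ← Real.rpow_mul hω, show 1 / p * (1 + γ) = (1 + γ) / p by ring]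
            ring
    exact (norm_add_le _ _).trans (add_le_add hterm1 hterm2)
  -- part 3: the bound on the increments of Y†
  have key3 : ∀ s t, 0 ≤ s → s ≤ t → t ≤ T →
      ‖(Df (y t)).comp (yd t) - (Df (y s)).comp (yd s)‖ ≤
        Hγ * ‖y t - y s‖ ^ γ * Dsup + M * ‖yd t - yd s‖ := by
    intro s t hs hst htT
    have hdec : (Df (y t)).comp (yd t) - (Df (y s)).comp (yd s)
        = ((Df (y t) - Df (y s)).comp (yd t)) + (Df (y s)).comp (yd t - yd s) := by
      ext u; simp
    rw [hdec]
    calc ‖((Df (y t) - Df (y s)).comp (yd t)) + (Df (y s)).comp (yd t - yd s)‖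
        ≤ ‖(Df (y t) - Df (y s)).comp (yd t)‖ + ‖(Df (y s)).comp (yd t - yd s)‖ :=
          norm_add_le _ _
      _ ≤ ‖Df (y t) - Df (y s)‖ * ‖yd t‖ + ‖Df (y s)‖ * ‖yd t - yd s‖ :=
          add_le_add (ContinuousLinearMap.opNorm_comp_le _ _)
            (ContinuousLinearMap.opNorm_comp_le _ _)
      _ ≤ (Hγ * ‖y t - y s‖ ^ γ) * Dsup + M * ‖yd t - yd s‖ :=
          add_le_add
            (mul_le_mul (hDf_hold _ _) (hydsup t (hs.trans hst) htT)
              (norm_nonneg _)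
              (mul_nonneg hHγ (Real.rpow_nonneg (norm_nonneg _) _)))
            (mul_le_mul_of_nonneg_right (hDf_bdd _) (norm_nonneg _))
      _ = Hγ * ‖y t - y s‖ ^ γ * Dsup + M * ‖yd t - yd s‖ := by ring
  refine ⟨key1, key2, key3, ?_⟩
  -- part 4: controlled rough path exponents
  set K := max 1 (ω 0 T) with hK
  have hK1 : (1:ℝ) ≤ K := le_max_left _ _
  have hK0 : (0:ℝ) ≤ K := by linarith
  have hωK : ∀ s t, 0 ≤ s → s ≤ t → t ≤ T → ω s t ≤ K := fun s t hs hst htT =>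
    (hω_mono s t 0 T le_rfl hs hst htT le_rfl).trans (le_max_right _ _)
  have hq0 : (0:ℝ) < q := by linarith
  have hr0 : (0:ℝ) < r := by linarith
  have hmax1 : (0:ℝ) < max q (p / γ) := lt_of_lt_of_le hq0 (le_max_left _ _)
  have hmax2 : (0:ℝ) < max r (p / (1 + γ)) := lt_of_lt_of_le hr0 (le_max_left _ _)
  set e₁ := 1 / max q (p / γ) with he₁
  set e₂ := 1 / max r (p / (1 + γ)) with he₂
  have he₁0 : 0 < e₁ := by positivity
  have he₂0 : 0 < e₂ := by positivity
  have he₁q : e₁ ≤ 1 / q := by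
    apply one_div_le_one_div_of_le hq0 (le_max_left _ _)
  have he₁γ : e₁ ≤ γ / p := by
    rw [show γ / p = 1 / (p / γ) by rw [one_div_div]]
    exact one_div_le_one_div_of_le (by positivity) (le_max_right _ _)
  have he₂r : e₂ ≤ 1 / r := one_div_le_one_div_of_le hr0 (le_max_left _ _)
  have he₂γ : e₂ ≤ (1 + γ) / p := by
    rw [show (1 + γ) / p = 1 / (p / (1 + γ)) by rw [one_div_div]]
    exact one_div_le_one_div_of_le (by positivity) (le_max_right _ _)
  refine ⟨Hγ * Cp' ^ γ * Dsup * K ^ (γ / p - e₁) + M * Cq * K ^ (1 / q - e₁),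
    M * Cr * K ^ (1 / r - e₂) + Hγ * Cp' ^ (1 + γ) * K ^ ((1 + γ) / p - e₂),
    by positivity, by positivity, ?_, ?_⟩
  · intro s t hs hst htT
    have hω := hω_nonneg s t hs hst htT
    have hωK' := hωK s t hs hst htT
    have hΔγ : ‖y t - y s‖ ^ γ ≤ Cp' ^ γ * ω s t ^ (γ / p) := by
      calc ‖y t - y s‖ ^ γ ≤ (Cp' * ω s t ^ (1 / p)) ^ γ :=
            Real.rpow_le_rpow (norm_nonneg _) (hyp s t hs hst htT) hγ0.le
        _ = Cp' ^ γ * ω s t ^ (γ / p) := by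
            rw [Real.mul_rpow hCp' (Real.rpow_nonneg hω _), ← Real.rpow_mul hω,
              show 1 / p * γ = γ / p by ring]
    calc ‖(Df (y t)).comp (yd t) - (Df (y s)).comp (yd s)‖
        ≤ Hγ * ‖y t - y s‖ ^ γ * Dsup + M * ‖yd t - yd s‖ := key3 s t hs hst htT
      _ ≤ Hγ * (Cp' ^ γ * ω s t ^ (γ / p)) * Dsup + M * (Cq * ω s t ^ (1 / q)) :=
          add_le_add
            (mul_le_mul_of_nonneg_right (mul_le_mul_of_nonneg_left hΔγ hHγ) hDsup)
            (mul_le_mul_of_nonneg_left (hyd s t hs hst htT) hM)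
      _ ≤ Hγ * (Cp' ^ γ * (K ^ (γ / p - e₁) * ω s t ^ e₁)) * Dsup
            + M * (Cq * (K ^ (1 / q - e₁) * ω s t ^ e₁)) :=
          add_le_add
            (mul_le_mul_of_nonneg_right
              (mul_le_mul_of_nonneg_left
                (mul_le_mul_of_nonneg_left (aux_interp hω hωK' hK1 he₁0 he₁γ)
                  (Real.rpow_nonneg hCp' _)) hHγ) hDsup)
            (mul_le_mul_of_nonneg_left
              (mul_le_mul_of_nonneg_left (aux_interp hω hωK' hK1 he₁0 he₁q) hCq) hM)
      _ = (Hγ * Cp' ^ γ * Dsup * K ^ (γ / p - e₁) + M * Cq * K ^ (1 / q - e₁))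
            * ω s t ^ e₁ := by ring
  · intro s t hs hst htT
    have hω := hω_nonneg s t hs hst htT
    have hωK' := hωK s t hs hst htT
    calc ‖f (y t) - f (y s) - ((Df (y s)).comp (yd s)) (x1 s t)‖
        ≤ M * Cr * ω s t ^ (1 / r) + Hγ * Cp' ^ (1 + γ) * ω s t ^ ((1 + γ) / p) :=
          key2 s t hs hst htT
      _ ≤ M * Cr * (K ^ (1 / r - e₂) * ω s t ^ e₂)
            + Hγ * Cp' ^ (1 + γ) * (K ^ ((1 + γ) / p - e₂) * ω s t ^ e₂) :=
          add_le_add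
            (mul_le_mul_of_nonneg_left (aux_interp hω hωK' hK1 he₂0 he₂r)
              (mul_nonneg hM hCr))
            (mul_le_mul_of_nonneg_left (aux_interp hω hωK' hK1 he₂0 he₂γ)
              (mul_nonneg hHγ (Real.rpow_nonneg hCp' _)))
      _ = (M * Cr * K ^ (1 / r - e₂) + Hγ * Cp' ^ (1 + γ) * K ^ ((1 + γ) / p - e₂))
            * ω s t ^ e₂ := by ring
end
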